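/- arXiv:1903.02022 — 2 statements merged into one kernel-verified Lean document; each statement's English description precedes it below -/
import Mathlib

section
/- For every n ≥ 1 there exists a constant C = C(n) < ∞ with the following property: for every convex set K ⊆ ℝ^{n+1} with nonempty interior, whose boundary M = ∂K is the convex hypersurface, and for every k > 0, one has k^{−n/2} ∫_M e^{−|y|²/k} dH^n(y) ≤ C, where H^n denotes n-dimensional Hausdorff measure on ℝ^{n+1}. -/
open Real Set Filter Metric MeasureTheory
open scoped Topology ENNReal NNReal RealInnerProductSpace

noncomputable section


set_option linter.unusedSectionVars false
set_option linter.unusedVariables false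


variable {F : Type*} [NormedAddCommGroup F] [InnerProductSpace ℝ F] [CompleteSpace F]

/-- basic algebraic step -/
lemma proj_dist_le {C : Set F} {u₁ u₂ a b : F}
    (h1 : ⟪u₁ - a, b - a⟫ ≤ 0) (h2 : ⟪u₂ - b, a - b⟫ ≤ 0) :
    ‖a - b‖ ≤ ‖u₁ - u₂‖ := by
  have h2' : ⟪b - u₂, b - a⟫ ≤ 0 := by
    have : a - b = -(b - a) := by abel
    rw [this, inner_neg_right] at h2
    rw [← neg_neg (⟪b - u₂, b - a⟫), ← inner_neg_left, neg_sub]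
    linarith
  have hsum : ⟪(u₁ - a) + (b - u₂), b - a⟫ ≤ 0 := by
    rw [inner_add_left]; linarith
  have hexp : (u₁ - a) + (b - u₂) = (u₁ - u₂) + (b - a) := by abel
  rw [hexp, inner_add_left] at hsum
  have hn : ‖b - a‖ ^ 2 ≤ ⟪u₂ - u₁, b - a⟫ := by
    have := real_inner_self_eq_norm_sq (b - a)
    have h3 : ⟪u₂ - u₁, b - a⟫ = -⟪u₁ - u₂, b - a⟫ := by
      rw [← inner_neg_left]; congr 1; abel
    nlinarith
  have hle : ⟪u₂ - u₁, b - a⟫ ≤ ‖u₂ - u₁‖ * ‖b - a‖ := real_inner_le_norm _ _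
  have hba : ‖b - a‖ ≤ ‖u₂ - u₁‖ := by
    nlinarith [norm_nonneg (b - a), norm_nonneg (u₂ - u₁)]
  rw [← norm_neg (a - b), neg_sub, ← norm_neg (u₁ - u₂), neg_sub]
  exact hba

lemma exists_proj (C : Set F) (hne : C.Nonempty) (hcl : IsClosed C) (hconv : Convex ℝ C) :
    ∃ P : F → F, (∀ u, P u ∈ C) ∧ LipschitzWith 1 P ∧
      (∀ z x, x ∈ C → (∀ w ∈ C, ⟪z - x, w - x⟫ ≤ 0) → P z = x) := by
  have hcomp : IsComplete C := hcl.isComplete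
  choose P hPmem hPinf using exists_norm_eq_iInf_of_complete_convex hne hcomp hconv
  have hPchar : ∀ u, ∀ w ∈ C, ⟪u - P u, w - P u⟫ ≤ 0 := fun u =>
    (norm_eq_iInf_iff_real_inner_le_zero hconv (hPmem u)).1 (hPinf u)
  refine ⟨P, hPmem, ?_, ?_⟩
  · refine LipschitzWith.of_dist_le_mul fun u₁ u₂ => ?_
    simp only [NNReal.coe_one, one_mul, dist_eq_norm]
    exact proj_dist_le (C := C) (hPchar u₁ (P u₂) (hPmem u₂)) (hPchar u₂ (P u₁) (hPmem u₁))
  · intro z x hx hobtuse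
    have h := proj_dist_le (C := C) (hPchar z x hx) (hobtuse (P z) (hPmem z))
    simp only [sub_self, norm_zero] at h
    have : ‖P z - x‖ = 0 := le_antisymm h (norm_nonneg _)
    have := norm_sub_eq_zero_iff.mp this
    exact this


/-- The insertion map `EuclideanSpace ℝ (Fin n) → EuclideanSpace ℝ (Fin (n+1))` fixing the
`i`-th coordinate to `σ` is an isometry. -/
lemma insert_isometry {n : ℕ} (i : Fin (n + 1)) (σ : ℝ) :
    Isometry (fun y : EuclideanSpace ℝ (Fin n) =>
      ((WithLp.equiv 2 (Fin (n+1) → ℝ)).symm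
        (i.insertNth σ (WithLp.equiv 2 (Fin n → ℝ) y)) : EuclideanSpace ℝ (Fin (n + 1)))) := by
  apply Isometry.of_dist_eq
  intro y y'
  rw [EuclideanSpace.dist_eq, EuclideanSpace.dist_eq]
  congr 1
  rw [Fin.sum_univ_succAbove _ i]
  simp [WithLp.equiv_symm_apply, PiLp.toLp_apply, Fin.insertNth_apply_same,
    Fin.insertNth_apply_succAbove]

/-- Bound on the Hausdorff measure of a coordinate face of a cube in `ℝ^{n+1}`. -/
lemma face_bound {n : ℕ} (hn : 1 ≤ n) (i : Fin (n + 1)) (σ : ℝ) {r : ℝ} (hr : 0 < r) :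
    μH[(n : ℝ)] {x : EuclideanSpace ℝ (Fin (n + 1)) | x i = σ ∧ ∀ j, |x j| ≤ 2 * r}
      ≤ ((1 * ((n : ℝ≥0) ^ ((1 / (2:ℝ≥0∞)).toReal)) : ℝ≥0) : ℝ≥0∞) ^ (n : ℝ)
          * ENNReal.ofReal ((4 * r) ^ n) := by
  haveI : Nonempty (Fin n) := ⟨⟨0, hn⟩⟩
  set L : ℝ≥0 := (n : ℝ≥0) ^ ((1 / (2:ℝ≥0∞)).toReal) with hL
  -- the Lipschitz map from `(Fin n → ℝ)` (sup norm) into `ℝ^{n+1}`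
  set e : (Fin n → ℝ) → EuclideanSpace ℝ (Fin n) := fun x => (WithLp.equiv 2 (Fin n → ℝ)).symm x with he
  have hlip_e : LipschitzWith L e := by
    have h2 := (PiLp.antilipschitzWith_ofLp 2 (fun _ : Fin n => ℝ)).to_rightInverse
      (WithLp.equiv 2 (Fin n → ℝ)).right_inv
    simpa [hL, he] using h2
  set ι' : EuclideanSpace ℝ (Fin n) → EuclideanSpace ℝ (Fin (n + 1)) :=
    fun y => (WithLp.equiv 2 (Fin (n+1) → ℝ)).symm
        (i.insertNth σ (WithLp.equiv 2 (Fin n → ℝ) y)) with hι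
  have hlip : LipschitzWith (1 * L) (ι' ∘ e) :=
    LipschitzWith.comp ((insert_isometry i σ).lipschitz) hlip_e
  set B : Set (Fin n → ℝ) := Set.pi univ (fun _ => Icc (-(2 * r)) (2 * r)) with hB
  have hsub : {x : EuclideanSpace ℝ (Fin (n + 1)) | x i = σ ∧ ∀ j, |x j| ≤ 2 * r}
      ⊆ (ι' ∘ e) '' B := by
    rintro x ⟨hxi, hxj⟩
    refine ⟨fun j => x (i.succAbove j), ?_, ?_⟩
    · intro j _
      rw [mem_Icc]
      have := hxj (i.succAbove j)
      rw [abs_le] at this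
      exact this
    · show ι' (e fun j => x (i.succAbove j)) = x
      simp only [hι, he]
      rw [Equiv.symm_apply_eq]
      have h1 : WithLp.equiv 2 (Fin n → ℝ)
            ((WithLp.equiv 2 (Fin n → ℝ)).symm fun j => x (i.succAbove j))
          = fun j => x (i.succAbove j) := Equiv.apply_symm_apply _ _
      rw [h1, ← hxi]
      have h2 := Fin.insertNth_self_removeNth i (fun j => x j)
      funext j
      have h3 := congrFun h2 j
      exact h3
  calc μH[(n : ℝ)] {x : EuclideanSpace ℝ (Fin (n + 1)) | x i = σ ∧ ∀ j, |x j| ≤ 2 * r}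
      ≤ μH[(n : ℝ)] ((ι' ∘ e) '' B) := measure_mono hsub
    _ ≤ ((1 * L : ℝ≥0) : ℝ≥0∞) ^ (n : ℝ) * μH[(n : ℝ)] B :=
        hlip.hausdorffMeasure_image_le (by positivity) B
    _ ≤ ((1 * L : ℝ≥0) : ℝ≥0∞) ^ (n : ℝ) * ENNReal.ofReal ((4 * r) ^ n) := by
        gcongr
        have hH : (μH[(n : ℝ)] : Measure (Fin n → ℝ)) = volume := by
          simpa using hausdorffMeasure_pi_real (ι := Fin n)
        rw [hH, hB, volume_pi_pi, Real.volume_Icc]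
        have : (2 * r - -(2 * r)) = 4 * r := by ring
        rw [this, Finset.prod_const, ← ENNReal.ofReal_pow (by positivity)]
        simp
/-- Coordinates are bounded by the Euclidean norm. -/
lemma abs_coord_le_norm {m : ℕ} (x : EuclideanSpace ℝ (Fin m)) (j : Fin m) : |x j| ≤ ‖x‖ := by
  rw [EuclideanSpace.norm_eq]
  have h1 : |x j| = Real.sqrt (|x j| ^ 2) := by
    rw [Real.sqrt_sq_eq_abs, abs_abs]
  rw [h1]
  apply Real.sqrt_le_sqrt
  have := Finset.single_le_sum (f := fun i => ‖x i‖ ^ 2)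
    (fun i _ => by positivity) (Finset.mem_univ j)
  simpa using this

/-- Euclidean norm bounded by (dimension) times sup of coordinates. -/
lemma norm_le_card_mul_sup {m : ℕ} (x : EuclideanSpace ℝ (Fin m)) (b : ℝ) (hb : 0 ≤ b)
    (h : ∀ j, |x j| ≤ b) : ‖x‖ ≤ m * b := by
  rw [EuclideanSpace.norm_eq]
  have h1 : ∑ i, ‖x i‖ ^ 2 ≤ m * b ^ 2 := by
    calc ∑ i, ‖x i‖ ^ 2 ≤ ∑ _i : Fin m, b ^ 2 := by
          apply Finset.sum_le_sum
          intro i _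
          have := h i
          have : ‖x i‖ ≤ b := by simpa [Real.norm_eq_abs] using h i
          nlinarith [norm_nonneg (x i)]
      _ = m * b ^ 2 := by simp [Finset.sum_const, mul_comm]
  calc Real.sqrt (∑ i, ‖x i‖ ^ 2) ≤ Real.sqrt (m * b ^ 2) := Real.sqrt_le_sqrt h1
    _ ≤ Real.sqrt ((m * b) ^ 2) := by
        apply Real.sqrt_le_sqrt
        have hm2 : (m : ℝ) ≤ (m : ℝ) ^ 2 := by
          have := Nat.le_self_pow (two_ne_zero) m
          exact_mod_cast this
        nlinarith [sq_nonneg b]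
    _ = m * b := by
        rw [Real.sqrt_sq (by positivity)]

/-- Supporting functional bound on the closure. -/
lemma support_le_on_closure {E : Type*} [NormedAddCommGroup E] [NormedSpace ℝ E]
    {K : Set E} (hK : Convex ℝ K) {a : E} (ha : a ∈ interior K)
    (f : E →L[ℝ] ℝ) {x : E} (hf : ∀ w ∈ interior K, f w < f x) :
    ∀ y ∈ closure K, f y ≤ f x := by
  intro y hy
  set h : ℝ → ℝ := fun θ => (1 - θ) * f y + θ * f a with hh
  have hcont : Continuous h := by fun_prop
  have hle : ∀ θ ∈ Ioo (0:ℝ) 1, h θ ≤ f x := by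
    intro θ hθ
    have hmem : (1 - θ) • y + θ • a ∈ interior K := by
      apply hK.combo_closure_interior_mem_interior hy ha (by linarith [hθ.2]) hθ.1
      ring
    have := hf _ hmem
    have heq : f ((1 - θ) • y + θ • a) = h θ := by
      simp [hh, map_add, _root_.map_smul, smul_eq_mul]
    linarith [heq ▸ this]
  have htend : Tendsto h (𝓝[>] (0:ℝ)) (𝓝 (h 0)) :=
    (hcont.continuousAt).continuousWithinAt.tendsto
  have h0 : h 0 = f y := by simp [hh]
  rw [← h0]
  refine le_of_tendsto htend ?_
  filter_upwards [Ioo_mem_nhdsGT_of_mem (by constructor <;> norm_num : (0:ℝ) ∈ Ico (0:ℝ) 1)]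
    with θ hθ using hle θ hθ

/-- Main geometric lemma: area of a convex boundary within a ball. -/
lemma cover_bound {n : ℕ} (hn : 1 ≤ n) :
    ∃ c : ℝ≥0∞, c ≠ ∞ ∧ ∀ K : Set (EuclideanSpace ℝ (Fin (n + 1))), Convex ℝ K →
      (interior K).Nonempty → ∀ r : ℝ, 0 < r →
        μH[(n : ℝ)] (frontier K ∩ ball 0 r) ≤ c * ENNReal.ofReal (r ^ n) := by
  classical
  set Lc : ℝ≥0∞ :=
    ((1 * ((n : ℝ≥0) ^ ((1 / (2:ℝ≥0∞)).toReal)) : ℝ≥0) : ℝ≥0∞) ^ (n : ℝ) with hLc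
  have hLcfin : Lc ≠ ∞ := by
    apply ENNReal.rpow_ne_top_of_nonneg (by positivity)
    exact ENNReal.coe_ne_top
  refine ⟨(2 * (n + 1)) * Lc * ENNReal.ofReal (4 ^ n), ?_, ?_⟩
  · apply ENNReal.mul_ne_top
    apply ENNReal.mul_ne_top
    · simp [ENNReal.mul_ne_top]
    · exact hLcfin
    · exact ENNReal.ofReal_ne_top
  intro K hK hKint r hr
  by_cases hE : (frontier K ∩ ball 0 r).Nonempty
  swap
  · rw [not_nonempty_iff_eq_empty.mp hE]
    simp
  obtain ⟨x₀, hx₀⟩ := hE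
  set C : Set (EuclideanSpace ℝ (Fin (n + 1))) := closure K ∩ closedBall 0 r with hC
  have hx₀C : x₀ ∈ C :=
    ⟨frontier_subset_closure hx₀.1, ball_subset_closedBall hx₀.2⟩
  obtain ⟨P, hPmem, hPlip, hPuniq⟩ := exists_proj C ⟨x₀, hx₀C⟩
    (isClosed_closure.inter Metric.isClosed_closedBall)
    ((hK.closure).inter (convex_closedBall 0 r))
  set S : Set (EuclideanSpace ℝ (Fin (n + 1))) := ⋃ i : Fin (n + 1), ⋃ σ : Bool,
    {x : (EuclideanSpace ℝ (Fin (n + 1))) | x i = (if σ then 2 * r else -(2 * r)) ∧ ∀ j, |x j| ≤ 2 * r} with hS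
  -- coverage
  have hcov : frontier K ∩ ball 0 r ⊆ P '' S := by
    rintro x ⟨hxf, hxb⟩
    have hxnorm : ‖x‖ < r := mem_ball_zero_iff.mp hxb
    have hxC : x ∈ C := ⟨frontier_subset_closure hxf, ball_subset_closedBall hxb⟩
    have hxint : x ∉ interior K := hxf.2
    obtain ⟨f, hf⟩ := geometric_hahn_banach_open_point hK.interior isOpen_interior hxint
    obtain ⟨a, ha⟩ := hKint
    have hfne : f a < f x := hf a ha
    set ν : (EuclideanSpace ℝ (Fin (n + 1))) := (InnerProductSpace.toDual ℝ (EuclideanSpace ℝ (Fin (n + 1)))).symm f with hν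
    have hνapp : ∀ w, ⟪ν, w⟫ = f w := fun w => InnerProductSpace.toDual_symm_apply
    have hνnorm : 0 < ‖ν‖ := by
      rw [norm_pos_iff]
      intro h0
      have := hνapp a
      have h1 := hνapp x
      rw [h0] at this h1
      simp at this h1
      rw [← this, ← h1] at hfne
      exact lt_irrefl 0 hfne
    have hfcl : ∀ y ∈ closure K, f y ≤ f x := support_le_on_closure hK ha f hf
    -- find crossing time via IVT for the sup-norm of coordinates
    set q : ℝ → (EuclideanSpace ℝ (Fin (n + 1))) := fun t => x + t • ν with hq
    set m : ℝ → ℝ := fun t => ‖(fun j => q t j : Fin (n + 1) → ℝ)‖ with hm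
    have hmcont : Continuous m := by
      apply Continuous.norm
      apply continuous_pi
      intro j
      have : (fun t => q t j) = fun t => x j + t * ν j := by
        funext t
        simp [hq, PiLp.add_apply, PiLp.smul_apply, smul_eq_mul]
      rw [this]
      fun_prop
    set T : ℝ := (2 * r * (n + 1 + 1) + ‖x‖) / ‖ν‖ with hT
    have hT0 : 0 ≤ T := by
      apply div_nonneg _ (le_of_lt hνnorm)
      positivity
    have hm0 : m 0 ≤ r := by
      have : ∀ j, |q 0 j| ≤ ‖x‖ := by
        intro j
        have : q 0 = x := by simp [hq]
        rw [this]
        exact abs_coord_le_norm x j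
      calc m 0 ≤ ‖x‖ := by
            apply pi_norm_le_iff_of_nonneg (norm_nonneg x) |>.mpr
            intro j
            simpa [Real.norm_eq_abs] using this j
        _ ≤ r := le_of_lt hxnorm
    have hmT : 2 * r ≤ m T := by
      have hqT : ‖q T‖ ≥ 2 * r * (n + 1 + 1) := by
        have h1 : ‖q T‖ ≥ T * ‖ν‖ - ‖x‖ := by
          have h2 := norm_sub_le (x + T • ν) x
          rw [add_sub_cancel_left] at h2
          rw [norm_smul, Real.norm_eq_abs, abs_of_nonneg hT0] at h2
          have : ‖q T‖ = ‖x + T • ν‖ := rfl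
          rw [this]
          linarith
        have hTnorm : T * ‖ν‖ = 2 * r * (n + 1 + 1) + ‖x‖ := by
          rw [hT, div_mul_cancel₀ _ hνnorm.ne']
        linarith
      -- sup of coords ≥ norm / (n+1+1)  (using n+1 coords; crude bound)
      by_contra hcon
      push_neg at hcon
      have hall : ∀ j, |q T j| ≤ m T := fun j => by
        simpa [Real.norm_eq_abs] using norm_le_pi_norm (fun j => q T j : Fin (n + 1) → ℝ) j
      have hmnn : 0 ≤ m T := norm_nonneg _
      have := norm_le_card_mul_sup (q T) (m T) hmnn hall
      -- ‖q T‖ ≤ (n+1) * m T < (n+1) * 2r ≤ 2r(n+2) contradiction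
      have hlt : ((n:ℝ) + 1) * m T < ((n:ℝ) + 1) * (2 * r) := by
        apply mul_lt_mul_of_pos_left hcon (by positivity)
      have hcast : ((n + 1 : ℕ) : ℝ) = (n : ℝ) + 1 := by push_cast; ring
      rw [hcast] at this
      nlinarith [hr]
    have hIVT := intermediate_value_Icc hT0 hmcont.continuousOn
    have h2r : 2 * r ∈ Icc (m 0) (m T) := ⟨by linarith, hmT⟩
    obtain ⟨t, ht, hmt⟩ := hIVT h2r
    set z : (EuclideanSpace ℝ (Fin (n + 1))) := q t with hz
    -- z lands on a face
    have hzS : z ∈ S := by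
      have hle : ∀ j, |z j| ≤ 2 * r := by
        intro j
        have := norm_le_pi_norm (fun j => q t j : Fin (n + 1) → ℝ) j
        rw [show ‖(fun j => q t j : Fin (n + 1) → ℝ)‖ = m t from rfl] at this
        simpa [Real.norm_eq_abs, hmt] using this
      -- the sup norm is attained at some coordinate
      obtain ⟨i, _, hiattain⟩ := Finset.exists_mem_eq_sup (Finset.univ : Finset (Fin (n + 1)))
        Finset.univ_nonempty (fun j => ‖q t j‖₊)
      have hieq : |z i| = 2 * r := by
        have h1 : m t = ‖q t i‖ := by
          have hrfl : m t = ‖(fun j => q t j : Fin (n + 1) → ℝ)‖ := rfl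
          rw [hrfl]
          simp only [Pi.norm_def]
          rw [hiattain]
          simp
        rw [← hmt, h1]
        simp [Real.norm_eq_abs, hz]
      rcases (abs_eq (by positivity : (0:ℝ) ≤ 2 * r)).mp hieq with h | h
      · exact mem_iUnion.mpr ⟨i, mem_iUnion.mpr ⟨true, by simpa using ⟨h, hle⟩⟩⟩
      · exact mem_iUnion.mpr ⟨i, mem_iUnion.mpr ⟨false, by simpa using ⟨h, hle⟩⟩⟩
    refine ⟨z, hzS, ?_⟩
    apply hPuniq z x hxC
    intro w hw
    have hzx : z - x = t • ν := by simp [hz, hq]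
    rw [hzx, real_inner_smul_left]
    have hwx : ⟪ν, w - x⟫ = f w - f x := by
      rw [hνapp, map_sub]
    rw [hwx]
    have hfw : f w ≤ f x := hfcl w hw.1
    have ht0 : 0 ≤ t := ht.1
    nlinarith
  -- measure estimate
  calc μH[(n : ℝ)] (frontier K ∩ ball 0 r) ≤ μH[(n : ℝ)] (P '' S) := measure_mono hcov
    _ ≤ ((1 : ℝ≥0) : ℝ≥0∞) ^ (n : ℝ) * μH[(n : ℝ)] S :=
        hPlip.hausdorffMeasure_image_le (by positivity) S
    _ = μH[(n : ℝ)] S := by simp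
    _ ≤ ∑' i : Fin (n + 1), ∑' σ : Bool,
          μH[(n : ℝ)] {x : (EuclideanSpace ℝ (Fin (n + 1))) | x i = (if σ then 2 * r else -(2 * r)) ∧ ∀ j, |x j| ≤ 2 * r} := by
        apply le_trans (measure_iUnion_le _)
        exact ENNReal.tsum_le_tsum fun i => measure_iUnion_le _
    _ ≤ ∑' _i : Fin (n + 1), ∑' _σ : Bool, Lc * ENNReal.ofReal ((4 * r) ^ n) := by
        apply ENNReal.tsum_le_tsum
        intro i
        apply ENNReal.tsum_le_tsum
        intro σ
        exact face_bound hn i _ hr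
    _ = ∑' _i : Fin (n + 1), 2 * (Lc * ENNReal.ofReal ((4 * r) ^ n)) := by
        apply tsum_congr
        intro i
        rw [tsum_fintype]
        simp [two_mul]
    _ = ((n + 1 : ℕ) : ℝ≥0∞) * (2 * (Lc * ENNReal.ofReal ((4 * r) ^ n))) := by
        rw [tsum_fintype]
        simp [Finset.sum_const, Finset.card_univ, nsmul_eq_mul]
    _ = (2 * (n + 1)) * Lc * ENNReal.ofReal (4 ^ n) * ENNReal.ofReal (r ^ n) := by
        rw [mul_pow, ENNReal.ofReal_mul (by positivity)]
        push_cast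
        ring

/-- **Lemma (Gaussian area bound for convex hypersurfaces).**
For every `n ≥ 1` there exists a constant `C = C(n) < ∞` such that for every convex
hypersurface `M = ∂K` of `ℝ^(n+1)` (the boundary of a convex set `K` with nonempty
interior) and every `k > 0`,
`k^(-n/2) ∫_M e^(-|y|²/k) dH^n(y) ≤ C`,
where `H^n` is the `n`-dimensional Hausdorff measure. -/
theorem gaussian_area_bound_convex (n : ℕ) (hn : 1 ≤ n) :
    ∃ C : ℝ, 0 < C ∧
      ∀ K : Set (EuclideanSpace ℝ (Fin (n + 1))),
        Convex ℝ K → (interior K).Nonempty →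
          ∀ k : ℝ, 0 < k →
            (∫⁻ y in frontier K, ENNReal.ofReal (Real.exp (-‖y‖ ^ 2 / k)) ∂ μH[(n : ℝ)])
              ≤ ENNReal.ofReal (C * k ^ ((n : ℝ) / 2)) := by
  obtain ⟨c, hcfin, hc⟩ := cover_bound hn
  -- the summable series controlling the annuli
  set f : ℕ → ℝ := fun j => Real.exp (-(j : ℝ) ^ 2) * ((j : ℝ) + 1) ^ n with hf
  have hfnonneg : ∀ j, 0 ≤ f j := fun j => by positivity
  have hfsummable : Summable f := by
    set g : ℕ → ℝ := fun m => (m : ℝ) ^ n * Real.exp (-1) ^ m with hg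
    have hgsum : Summable g := by
      apply summable_pow_mul_geometric_of_norm_lt_one
      rw [Real.norm_eq_abs, abs_of_pos (Real.exp_pos _)]
      exact Real.exp_lt_one_iff.mpr (by norm_num)
    have hshift : Summable (fun j : ℕ => g (j + 1)) := (summable_nat_add_iff 1).mpr hgsum
    have hbound : Summable (fun j : ℕ => Real.exp 1 * g (j + 1)) := hshift.mul_left _
    apply Summable.of_nonneg_of_le hfnonneg _ hbound
    intro j
    have h1 : Real.exp (-(j : ℝ) ^ 2) ≤ Real.exp (-(j : ℝ)) := by
      apply Real.exp_le_exp.mpr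
      have : (j : ℝ) ≤ (j : ℝ) ^ 2 := by
        have := Nat.le_self_pow two_ne_zero j
        exact_mod_cast this
      linarith
    have h2 : Real.exp 1 * g (j + 1)
        = ((j : ℝ) + 1) ^ n * Real.exp (-(j : ℝ)) := by
      rw [hg]
      push_cast
      rw [pow_succ]
      rw [← Real.exp_nat_mul]
      rw [← Real.exp_add]
      ring_nf
      rw [← Real.exp_add]
      congr 2
      · push_cast; ring
    calc f j ≤ Real.exp (-(j : ℝ)) * ((j : ℝ) + 1) ^ n := by
          apply mul_le_mul_of_nonneg_right h1 (by positivity)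
      _ = Real.exp 1 * g (j + 1) := by rw [h2]; ring
  set S : ℝ≥0∞ := ∑' j : ℕ, ENNReal.ofReal (f j) with hS
  have hSfin : S ≠ ∞ := by
    rw [hS, ← ENNReal.ofReal_tsum_of_nonneg hfnonneg hfsummable]
    exact ENNReal.ofReal_ne_top
  have hcSfin : c * S ≠ ∞ := ENNReal.mul_ne_top hcfin hSfin
  set C : ℝ := (c * S).toReal + 1 with hCdef
  refine ⟨C, by have := ENNReal.toReal_nonneg (a := c * S); linarith, ?_⟩
  intro K hK hKint k hk
  have hsk : 0 < Real.sqrt k := Real.sqrt_pos.mpr hk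
  set sk := Real.sqrt k with hskdef
  set A : ℕ → Set (EuclideanSpace ℝ (Fin (n + 1))) := fun j =>
    (frontier K ∩ ball 0 (((j : ℝ) + 1) * sk)) ∩ {y | (j : ℝ) * sk ≤ ‖y‖} with hA
  have hcover : frontier K ⊆ ⋃ j, A j := by
    intro y hy
    set j := ⌊‖y‖ / sk⌋₊ with hj
    have hj1 : (j : ℝ) ≤ ‖y‖ / sk := Nat.floor_le (by positivity)
    have hj2 : ‖y‖ / sk < (j : ℝ) + 1 := Nat.lt_floor_add_one _
    refine mem_iUnion.mpr ⟨j, ⟨⟨hy, ?_⟩, ?_⟩⟩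
    · rw [mem_ball_zero_iff]
      calc ‖y‖ = ‖y‖ / sk * sk := by field_simp
        _ < ((j : ℝ) + 1) * sk := by
            apply mul_lt_mul_of_pos_right hj2 hsk
    · show (j : ℝ) * sk ≤ ‖y‖
      calc (j : ℝ) * sk ≤ ‖y‖ / sk * sk := mul_le_mul_of_nonneg_right hj1 hsk.le
        _ = ‖y‖ := by field_simp
  have hAmeas : ∀ j, MeasurableSet (A j) := by
    intro j
    apply MeasurableSet.inter
    · exact (isClosed_frontier.measurableSet).inter measurableSet_ball
    · exact measurableSet_le measurable_const (continuous_norm.measurable)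
  calc (∫⁻ y in frontier K, ENNReal.ofReal (Real.exp (-‖y‖ ^ 2 / k)) ∂ μH[(n : ℝ)])
      ≤ ∫⁻ y in ⋃ j, A j, ENNReal.ofReal (Real.exp (-‖y‖ ^ 2 / k)) ∂ μH[(n : ℝ)] :=
        lintegral_mono_set hcover
    _ ≤ ∑' j : ℕ, ∫⁻ y in A j, ENNReal.ofReal (Real.exp (-‖y‖ ^ 2 / k)) ∂ μH[(n : ℝ)] :=
        lintegral_iUnion_le _ _
    _ ≤ ∑' j : ℕ, ENNReal.ofReal (Real.exp (-(j : ℝ) ^ 2)) * μH[(n : ℝ)] (A j) := by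
        apply ENNReal.tsum_le_tsum
        intro j
        have hstep : ∫⁻ y in A j, ENNReal.ofReal (Real.exp (-‖y‖ ^ 2 / k)) ∂ μH[(n : ℝ)]
            ≤ ∫⁻ _y in A j, ENNReal.ofReal (Real.exp (-(j : ℝ) ^ 2)) ∂ μH[(n : ℝ)] := by
          apply setLIntegral_mono' (hAmeas j)
          intro y hy
          apply ENNReal.ofReal_le_ofReal
          apply Real.exp_le_exp.mpr
          have hylb : (j : ℝ) * sk ≤ ‖y‖ := hy.2
          have hy2 : (j : ℝ) ^ 2 * k ≤ ‖y‖ ^ 2 := by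
            have hsq : ((j : ℝ) * sk) ^ 2 ≤ ‖y‖ ^ 2 := by
              apply sq_le_sq' _ hylb
              have : 0 ≤ (j : ℝ) * sk := by positivity
              linarith [norm_nonneg y]
            calc (j : ℝ) ^ 2 * k = ((j : ℝ) * sk) ^ 2 := by
                  rw [mul_pow, hskdef, Real.sq_sqrt hk.le]
              _ ≤ ‖y‖ ^ 2 := hsq
          rw [neg_div, neg_le_neg_iff]
          rw [le_div_iff₀ hk]
          linarith
        calc _ ≤ _ := hstep
          _ = ENNReal.ofReal (Real.exp (-(j : ℝ) ^ 2)) * μH[(n : ℝ)] (A j) :=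
            setLIntegral_const _ _
    _ ≤ ∑' j : ℕ, ENNReal.ofReal (Real.exp (-(j : ℝ) ^ 2)) *
          (c * ENNReal.ofReal ((((j : ℝ) + 1) * sk) ^ n)) := by
        apply ENNReal.tsum_le_tsum
        intro j
        apply mul_le_mul_right
        calc μH[(n : ℝ)] (A j)
            ≤ μH[(n : ℝ)] (frontier K ∩ ball 0 (((j : ℝ) + 1) * sk)) :=
              measure_mono inter_subset_left
          _ ≤ c * ENNReal.ofReal ((((j : ℝ) + 1) * sk) ^ n) :=
              hc K hK hKint _ (by positivity)
    _ = c * ENNReal.ofReal (sk ^ n) * S := by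
        rw [hS, ← ENNReal.tsum_mul_left]
        apply tsum_congr
        intro j
        rw [hf]
        rw [mul_pow, ENNReal.ofReal_mul (by positivity),
          ENNReal.ofReal_mul (Real.exp_nonneg _)]
        ring
    _ ≤ ENNReal.ofReal C * ENNReal.ofReal (k ^ ((n : ℝ) / 2)) := by
        have h1 : c * ENNReal.ofReal (sk ^ n) * S = (c * S) * ENNReal.ofReal (sk ^ n) := by
          ring
        rw [h1]
        have h2 : ENNReal.ofReal (sk ^ n) = ENNReal.ofReal (k ^ ((n : ℝ) / 2)) := by
          congr 1
          rw [hskdef, Real.sqrt_eq_rpow, ← Real.rpow_natCast (k ^ ((1:ℝ)/2)) n,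
            ← Real.rpow_mul hk.le]
          congr 1
          ring
        rw [h2]
        apply mul_le_mul_left
        have h3 : c * S = ENNReal.ofReal ((c * S).toReal) := (ENNReal.ofReal_toReal hcSfin).symm
        rw [h3]
        apply ENNReal.ofReal_le_ofReal
        rw [hCdef]
        linarith
    _ = ENNReal.ofReal (C * k ^ ((n : ℝ) / 2)) := by
        rw [← ENNReal.ofReal_mul]
        have := ENNReal.toReal_nonneg (a := c * S)
        rw [hCdef]
        linarith
end
end

section
/- Define v on D = {(y,t) ∈ ℝ × (−∞,0) : e^t cosh y < 1} by v(y,t) = arccos(e^t cosh y), so that cos(v(y,t)) = e^t cosh y and 0 < v(y,t) < π/2. Then v satisfies the graphical curve shortening flow equation ∂_t v = ∂_y² v / (1 + (∂_y v)²) on D. Consequently the right halves {(v(y,t), y)} of the Angenent ovals A_t = {(x,y) : cos x = e^t cosh y} move by graphical curve shortening flow. -/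
open Real Set Filter
open scoped Topology

noncomputable section

/-- The Angenent oval graph function `v(y,t) = arccos (eᵗ cosh y)`, a graph over the
`y`-axis. -/
def ovalFn (y t : ℝ) : ℝ := Real.arccos (Real.exp t * Real.cosh y)

private lemma coshPos_lemma (y t : ℝ) : 0 < Real.exp t * Real.cosh y :=
  mul_pos (Real.exp_pos t) (lt_of_lt_of_le one_pos (Real.one_le_cosh y))

/-- Derivative in `z` of `z ↦ ovalFn z t` at any point where `eᵗ cosh z < 1`. -/
private lemma hasDerivAt_oval_y (t z : ℝ) (hz : Real.exp t * Real.cosh z < 1) :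
    HasDerivAt (fun z' => ovalFn z' t)
      (-(Real.exp t * Real.sinh z) / Real.sqrt (1 - (Real.exp t * Real.cosh z) ^ 2)) z := by
  have hc0 : 0 < Real.exp t * Real.cosh z := coshPos_lemma z t
  have hinner : HasDerivAt (fun z' => Real.exp t * Real.cosh z') (Real.exp t * Real.sinh z) z :=
    (Real.hasDerivAt_cosh z).const_mul (Real.exp t)
  have harccos := Real.hasDerivAt_arccos (x := Real.exp t * Real.cosh z)
    (by linarith) (by linarith)
  have := harccos.comp z hinner
  convert this using 1
  · rfl
  · rfl
  · rfl
  · ring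

/-- **Lemma (the Angenent ovals move by curve shortening flow).**
On `D = {(y,t) : t < 0, eᵗ cosh y < 1}`, the function `v(y,t) = arccos(eᵗ cosh y)`
satisfies `cos (v(y,t)) = eᵗ cosh y`, `0 < v(y,t) < π/2`, and the graphical curve
shortening flow equation `∂ₜv = ∂_y²v / (1 + (∂_yv)²)`. Consequently the right halves
`{(v(y,t), y)}` of the Angenent ovals `A_t = {(x,y) : cos x = eᵗ cosh y}` move by
graphical curve shortening flow. -/
theorem angenent_oval_evolves_by_csf :
    ∀ y t : ℝ, t < 0 → Real.exp t * Real.cosh y < 1 →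
      Real.cos (ovalFn y t) = Real.exp t * Real.cosh y ∧
      0 < ovalFn y t ∧ ovalFn y t < π / 2 ∧
      deriv (fun s => ovalFn y s) t =
        deriv (fun z => deriv (fun z' => ovalFn z' t) z) y /
          (1 + (deriv (fun z' => ovalFn z' t) y) ^ 2) := by
  intro y t ht hlt
  have hc0 : 0 < Real.exp t * Real.cosh y := coshPos_lemma y t
  set c : ℝ := Real.exp t * Real.cosh y with hcdef
  set a : ℝ := Real.exp t * Real.sinh y with hadef
  have hcsq : c ^ 2 < 1 := by nlinarith
  have hs0 : 0 < Real.sqrt (1 - c ^ 2) := Real.sqrt_pos.mpr (by nlinarith)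
  set s : ℝ := Real.sqrt (1 - c ^ 2) with hsdef
  have hssq : s ^ 2 = 1 - c ^ 2 := Real.sq_sqrt (by nlinarith)
  refine ⟨Real.cos_arccos (by linarith) (le_of_lt hlt), Real.arccos_pos.mpr hlt,
    Real.arccos_lt_pi_div_two.mpr hc0, ?_⟩
  -- first derivative in y
  set G : ℝ → ℝ := fun z =>
    -(Real.exp t * Real.sinh z) / Real.sqrt (1 - (Real.exp t * Real.cosh z) ^ 2) with hGdef
  have hGy : G y = -a / s := rfl
  -- eventual equality of deriv with G near y
  have hopen : IsOpen {z : ℝ | Real.exp t * Real.cosh z < 1} :=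
    isOpen_lt (by continuity) continuous_const
  have hev : deriv (fun z' => ovalFn z' t) =ᶠ[𝓝 y] G := by
    filter_upwards [hopen.mem_nhds hlt] with z hz
    exact (hasDerivAt_oval_y t z hz).deriv
  -- derivative of G at y
  have hC : HasDerivAt (fun z => Real.exp t * Real.cosh z) a y :=
    (Real.hasDerivAt_cosh y).const_mul (Real.exp t)
  have hw : HasDerivAt (fun z => 1 - (Real.exp t * Real.cosh z) ^ 2)
      (-(2 * c ^ 1 * a)) y := by
    simpa using (hC.pow 2).const_sub 1
  have hS : HasDerivAt (fun z => Real.sqrt (1 - (Real.exp t * Real.cosh z) ^ 2))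
      (-(2 * c ^ 1 * a) / (2 * s)) y := by
    have := hw.sqrt (by show 1 - c ^ 2 ≠ 0; nlinarith)
    simpa using this
  have hA : HasDerivAt (fun z => -(Real.exp t * Real.sinh z)) (-c) y := by
    exact ((Real.hasDerivAt_sinh y).const_mul (Real.exp t)).neg
  have hGd : HasDerivAt G
      ((-c * s - -a * (-(2 * c ^ 1 * a) / (2 * s))) / s ^ 2) y :=
    hA.div hS (ne_of_gt hs0)
  -- derivative in t
  have hT : HasDerivAt (fun s' => ovalFn y s') (-(c / s)) t := by
    have hinner : HasDerivAt (fun s' => Real.exp s' * Real.cosh y) c t :=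
      (Real.hasDerivAt_exp t).mul_const (Real.cosh y)
    have harccos := Real.hasDerivAt_arccos (x := c) (by linarith) (ne_of_lt hlt)
    have := harccos.comp t hinner
    convert this using 1
    · rfl
    · rfl
    · rfl
    · rw [← hsdef]; ring
  rw [hT.deriv, hev.deriv_eq, hGd.deriv]
  rw [show deriv (fun z' => ovalFn z' t) y = -a / s from
    ((hasDerivAt_oval_y t y hlt).deriv)]
  have h1 : (0:ℝ) < 1 + (-a / s) ^ 2 := by positivity
  field_simp
  ring
end
end
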